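/- arXiv:2009.10775 — 2 statements merged into one kernel-verified Lean document; each statement's English description precedes it below -/
import Mathlib

section
/- For the semi-discrete structure update ρ s ε (d̊ⁿ - d̊ⁿ⁻¹)/τ + L d ⁿ = gⁿ with dⁿ = dⁿ⁻¹ + τ d̊ⁿ, where L is a self-adjoint positive semidefinite operator on a real inner product space, taking the inner product with d̊ⁿ yields the discrete energy inequality: (ρ s ε/2)|d̊ⁿ|² + (1/2)(L dⁿ, dⁿ) ≤ (ρ s ε/2)|d̊ⁿ⁻¹|² + (1/2)(L dⁿ⁻¹, dⁿ⁻¹) + τ (gⁿ, d̊ⁿ). -/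
/-!
Pairing the momentum equation with `τ • d̊ⁿ = dⁿ - dⁿ⁻¹` and expanding both pairings by
polarization gives an exact energy balance, in which the numerical dissipation
`(ρsε/2) ‖d̊ⁿ - d̊ⁿ⁻¹‖² + (1/2) (L (dⁿ - dⁿ⁻¹), dⁿ - dⁿ⁻¹)` appears on the left; dropping this
nonnegative term yields the inequality.
-/

open scoped RealInnerProductSpace

section

variable {H : Type*} [NormedAddCommGroup H] [InnerProductSpace ℝ H]

theorem two_mul_inner_sub_left_self (a b : H) :
    2 * ⟪a - b, a⟫ = ‖a‖ ^ 2 - ‖b‖ ^ 2 + ‖a - b‖ ^ 2 := by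
  rw [norm_sub_sq_real, inner_sub_left, real_inner_self_eq_norm_sq, real_inner_comm]
  ring

theorem LinearMap.IsSymmetric.two_mul_inner_sub_right {T : H →ₗ[ℝ] H} (hT : T.IsSymmetric)
    (a b : H) : 2 * ⟪T a, a - b⟫ = ⟪T a, a⟫ - ⟪T b, b⟫ + ⟪T (a - b), a - b⟫ := by
  have hab : ⟪T b, a⟫ = ⟪T a, b⟫ := by rw [hT, real_inner_comm]
  simp only [map_sub, inner_sub_left, inner_sub_right, hab]
  ring

theorem structure_update_energy_identity {ρsε τ : ℝ} (hτ : τ ≠ 0) {L : H →ₗ[ℝ] H}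
    (hL : L.IsSymmetric) {dvprev dprev dvn dn g : H}
    (heq : (ρsε / τ) • (dvn - dvprev) + L dn = g) (hd : dn = dprev + τ • dvn) :
    ρsε / 2 * ‖dvn‖ ^ 2 + 1 / 2 * ⟪L dn, dn⟫
        + (ρsε / 2 * ‖dvn - dvprev‖ ^ 2 + 1 / 2 * ⟪L (dn - dprev), dn - dprev⟫) =
      ρsε / 2 * ‖dvprev‖ ^ 2 + 1 / 2 * ⟪L dprev, dprev⟫ + τ * ⟪g, dvn⟫ := by
  have hstep : dn - dprev = τ • dvn := by rw [hd, add_sub_cancel_left]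
  have hpair : ρsε * ⟪dvn - dvprev, dvn⟫ + ⟪L dn, dn - dprev⟫ = τ * ⟪g, dvn⟫ := by
    rw [← heq, hstep, inner_add_left, real_inner_smul_left, real_inner_smul_right]
    field_simp
  have hkin := two_mul_inner_sub_left_self dvn dvprev
  have hpot := hL.two_mul_inner_sub_right dn dprev
  linear_combination hpair - ρsε / 2 * hkin - 1 / 2 * hpot

end

theorem structure_update_energy_inequality
    {H : Type*} [NormedAddCommGroup H] [InnerProductSpace ℝ H]
    (ρsε τ : ℝ) (hρ : 0 < ρsε) (hτ : 0 < τ)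
    (L : H →ₗ[ℝ] H)
    (hsym : ∀ x y : H, inner ℝ (L x) y = (inner ℝ x (L y) : ℝ))
    (hpsd : ∀ x : H, (0 : ℝ) ≤ inner ℝ (L x) x)
    (dvprev dprev dvn dn g : H)
    (heq : (ρsε / τ) • (dvn - dvprev) + L dn = g)
    (hd : dn = dprev + τ • dvn) :
    ρsε / 2 * ‖dvn‖ ^ 2 + 1 / 2 * (inner ℝ (L dn) dn : ℝ) ≤
      ρsε / 2 * ‖dvprev‖ ^ 2 + 1 / 2 * (inner ℝ (L dprev) dprev : ℝ)
        + τ * (inner ℝ g dvn : ℝ) := by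
  have hbalance := structure_update_energy_identity hτ.ne' hsym heq hd
  have hdissipation :
      0 ≤ ρsε / 2 * ‖dvn - dvprev‖ ^ 2 + 1 / 2 * ⟪L (dn - dprev), dn - dprev⟫ := by
    have := hpsd (dn - dprev)
    positivity
  linarith
end

section
/- If gⁿ = 0 for all n in the previous structure update, then the discrete energy Eⁿ := (ρsε/2)|d̊ⁿ|² + (1/2)(L dⁿ, dⁿ) is nonincreasing in n; hence the scheme is unconditionally stable for any τ > 0. -/
/-!
Testing the momentum equation `ρ (d̊ⁿ - d̊ⁿ⁻¹) + τ L dⁿ = 0` against `d̊ⁿ` and using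
`dⁿ - dⁿ⁻¹ = τ d̊ⁿ` gives the exact energy balance
`Eⁿ - Eⁿ⁻¹ = -(ρ/2) |d̊ⁿ - d̊ⁿ⁻¹|² - (τ²/2) (L d̊ⁿ, d̊ⁿ)`:
the implicit scheme only dissipates, whatever the step `τ`.
-/

open scoped RealInnerProductSpace

section EnergyBalance

variable {H : Type*} [SeminormedAddCommGroup H] [InnerProductSpace ℝ H]

noncomputable def discreteEnergy (ρ : ℝ) (L : H →ₗ[ℝ] H) (d dv : H) : ℝ :=
  ρ / 2 * ‖dv‖ ^ 2 + 1 / 2 * ⟪L d, d⟫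

theorem norm_sq_sub_norm_sq_eq (v w : H) :
    ‖v‖ ^ 2 - ‖w‖ ^ 2 = 2 * ⟪v - w, v⟫ - ‖v - w‖ ^ 2 := by
  rw [norm_sub_sq_real, inner_sub_left, real_inner_self_eq_norm_sq, real_inner_comm]
  ring

theorem LinearMap.IsSymmetric.inner_map_self_sub_inner_map_self {L : H →ₗ[ℝ] H}
    (hL : L.IsSymmetric) (a b : H) :
    ⟪L a, a⟫ - ⟪L b, b⟫ = 2 * ⟪L a, a - b⟫ - ⟪L (a - b), a - b⟫ := by
  have hba : ⟪L b, a⟫ = ⟪L a, b⟫ := by rw [hL b a, real_inner_comm]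
  simp only [map_sub, inner_sub_left, inner_sub_right, hba]
  ring

theorem discreteEnergy_sub_eq {ρ τ : ℝ} (hτ : τ ≠ 0) {L : H →ₗ[ℝ] H} (hL : L.IsSymmetric)
    {a b v w : H} (hmom : (ρ / τ) • (v - w) + L a = 0) (hstep : a = b + τ • v) :
    discreteEnergy ρ L a v - discreteEnergy ρ L b w =
      -(ρ / 2 * ‖v - w‖ ^ 2 + τ ^ 2 / 2 * ⟪L v, v⟫) := by
  have hmom' : ρ • (v - w) + τ • L a = 0 := by
    simpa [smul_add, smul_smul, mul_div_cancel₀ ρ hτ] using congrArg (τ • ·) hmom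
  have htest : ρ * ⟪v - w, v⟫ + τ * ⟪L a, v⟫ = 0 := by
    simpa only [inner_add_left, real_inner_smul_left, inner_zero_left] using
      congrArg (⟪·, v⟫) hmom'
  have hdiff : a - b = τ • v := by rw [hstep, add_sub_cancel_left]
  have hkin := norm_sq_sub_norm_sq_eq v w
  have hpot := hL.inner_map_self_sub_inner_map_self a b
  rw [hdiff, map_smul, real_inner_smul_left, real_inner_smul_right, real_inner_smul_right]
    at hpot
  unfold discreteEnergy
  linear_combination ρ / 2 * hkin + 1 / 2 * hpot + htest

theorem discreteEnergy_le {ρ τ : ℝ} (hρ : 0 ≤ ρ) (hτ : τ ≠ 0) {L : H →ₗ[ℝ] H}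
    (hL : L.IsSymmetric) {a b v w : H} (hv : 0 ≤ ⟪L v, v⟫)
    (hmom : (ρ / τ) • (v - w) + L a = 0) (hstep : a = b + τ • v) :
    discreteEnergy ρ L a v ≤ discreteEnergy ρ L b w := by
  have hbalance := discreteEnergy_sub_eq hτ hL hmom hstep
  have hdiss : 0 ≤ ρ / 2 * ‖v - w‖ ^ 2 + τ ^ 2 / 2 * ⟪L v, v⟫ := by positivity
  linarith

end EnergyBalance

theorem structure_scheme_unconditional_stability
    {H : Type*} [NormedAddCommGroup H] [InnerProductSpace ℝ H]
    (ρsε τ : ℝ) (hρ : 0 < ρsε) (hτ : 0 < τ)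
    (L : H →ₗ[ℝ] H)
    (hsym : ∀ x y : H, inner ℝ (L x) y = (inner ℝ x (L y) : ℝ))
    (hpsd : ∀ x : H, (0 : ℝ) ≤ inner ℝ (L x) x)
    (d dv : ℕ → H)
    (heq : ∀ n : ℕ, 1 ≤ n → (ρsε / τ) • (dv n - dv (n - 1)) + L (d n) = 0)
    (hd : ∀ n : ℕ, 1 ≤ n → d n = d (n - 1) + τ • dv n)
    (E : ℕ → ℝ)
    (hE : ∀ n, E n = ρsε / 2 * ‖dv n‖ ^ 2 + 1 / 2 * (inner ℝ (L (d n)) (d n) : ℝ)) :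
    ∀ n : ℕ, 1 ≤ n → E n ≤ E (n - 1) := by
  intro n hn
  rw [hE, hE]
  exact discreteEnergy_le hρ.le hτ.ne' hsym (hpsd _) (heq n hn) (hd n hn)
end
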